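/- Define the iterated logarithm by log_1(x) = ln x and log_{i+1}(x) = ln(log_i(x)), and Tower(0)=1, Tower(i+1) = e^{Tower(i)}. Fix k ≥ 1 and a real n ≥ Tower(k+1). Then ∑_{i=0}^{k-1} 1/log_{i+1}(n) < 1. -/

import Mathlib

noncomputable def Tower : ℕ → ℝ
  | 0 => 1
  | i + 1 => Real.exp (Tower i)

noncomputable def iterLog : ℕ → ℝ → ℝ
  | 0 => id
  | i + 1 => fun x => Real.log (iterLog i x)

/-! Since `Real.log` undoes `Tower (m + 1) = exp (Tower m)`, `n ≥ Tower (k + 1)` forces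
`log_{i+1} n ≥ Tower (k - i) ≥ 2 ^ (k - i)`, using `2 x ≤ exp x`. Hence the sum is dominated
termwise by the geometric sum `∑_{i<k} 2^{-(k-i)} = 1 - 2^{-k} < 1`. -/

open Finset

theorem two_pow_le_Tower (m : ℕ) : (2 : ℝ) ^ m ≤ Tower m := by
  induction m with
  | zero => simp [Tower]
  | succ m ih =>
    calc (2 : ℝ) ^ (m + 1) = 2 * 2 ^ m := pow_succ' 2 m
      _ ≤ 2 * Tower m := by gcongr
      _ ≤ Tower (m + 1) := Real.two_mul_le_exp

theorem Tower_le_iterLog {m i : ℕ} {x : ℝ} (h : Tower (m + i) ≤ x) : Tower m ≤ iterLog i x := by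
  induction i generalizing m with
  | zero => exact h
  | succ i ih =>
    have hexp : Real.exp (Tower m) ≤ iterLog i x := ih (m := m + 1) (by rwa [← add_assoc, add_right_comm] at h)
    calc Tower m = Real.log (Real.exp (Tower m)) := (Real.log_exp _).symm
      _ ≤ iterLog (i + 1) x := Real.log_le_log (Real.exp_pos _) hexp

theorem one_div_iterLog_le {m i : ℕ} {x : ℝ} (h : Tower (m + i) ≤ x) :
    1 / iterLog i x ≤ (2⁻¹ : ℝ) ^ m := by
  rw [inv_pow, ← one_div]
  exact one_div_le_one_div_of_le (by positivity) ((two_pow_le_Tower m).trans (Tower_le_iterLog h))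

theorem sum_range_inv_two_pow_sub (k : ℕ) :
    ∑ i ∈ range k, (2⁻¹ : ℝ) ^ (k - i) = 1 - 2⁻¹ ^ k := by
  induction k with
  | zero => simp
  | succ k ih =>
    rw [sum_range_succ']
    simp only [Nat.add_sub_add_right, ih, Nat.sub_zero, pow_succ]
    ring

theorem stmt_6_general (k : ℕ) (n : ℝ) (hn : Tower (k + 1) ≤ n) :
    ∑ i ∈ Finset.range k, 1 / iterLog (i + 1) n < 1 := by
  calc ∑ i ∈ range k, 1 / iterLog (i + 1) n
      ≤ ∑ i ∈ range k, (2⁻¹ : ℝ) ^ (k - i) := by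
        refine sum_le_sum fun i hi => one_div_iterLog_le ?_
        rwa [show k - i + (i + 1) = k + 1 by grind]
    _ = 1 - 2⁻¹ ^ k := sum_range_inv_two_pow_sub k
    _ < 1 := sub_lt_self 1 (by positivity)

theorem stmt_6 (k : ℕ) (hk : 1 ≤ k) (n : ℝ) (hn : Tower (k + 1) ≤ n) :
    ∑ i ∈ Finset.range k, 1 / iterLog (i + 1) n < 1 :=
  stmt_6_general k n hn
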